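/- The energy score ES(P, x) = E‖X − x‖₂ − (1/2)·E‖X − X'‖₂, where X, X' are i.i.d. with law P having finite first moment, is nonnegative, and equals zero if and only if P is the Dirac measure at x. -/

import Mathlib

/-!
Centre at the realization: with `Y = X - x`, the triangle inequality gives
`‖Y - Y'‖ ≤ ‖Y‖ + ‖Y'‖`, and the energy score is half the expected defect in this inequality,
hence nonnegative. If it vanishes, the defect vanishes almost surely; in an inner product space
this means `⟪Y, Y'⟫ = -‖Y‖ ‖Y'‖` almost surely, and integrating over the independent pair gives
`‖E Y‖² = -(E ‖Y‖)²`. So `E ‖Y‖ = 0`, i.e. `X = x` almost surely.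
-/

open MeasureTheory

open scoped RealInnerProductSpace

theorem inner_eq_neg_mul_norm_of_norm_sub_eq_add_norm {F : Type*} [SeminormedAddCommGroup F]
    [InnerProductSpace ℝ F] {a b : F} (h : ‖a - b‖ = ‖a‖ + ‖b‖) : ⟪a, b⟫ = -(‖a‖ * ‖b‖) := by
  have := norm_sub_sq_real a b
  rw [h] at this
  linarith

section NormedGroup

variable {E : Type*} [NormedAddCommGroup E] {x : E}

def triangleDefect (x : E) (p : E × E) : ℝ := ‖p.1 - x‖ + ‖p.2 - x‖ - ‖p.1 - p.2‖

theorem triangleDefect_nonneg (x : E) : 0 ≤ triangleDefect x := fun p =>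
  sub_nonneg.2 (by simpa only [dist_eq_norm] using dist_triangle_right p.1 p.2 x)

variable [MeasurableSpace E] {μ : Measure E}

noncomputable def energyScore (μ : Measure E) (x : E) : ℝ :=
  (∫ v, ‖v - x‖ ∂μ) - (1 / 2) * ∫ v, ∫ w, ‖v - w‖ ∂μ ∂μ

theorem energyScore_dirac [MeasurableSingletonClass E] (x : E) :
    energyScore (Measure.dirac x) x = 0 := by
  simp [energyScore, integral_dirac]

theorem eq_dirac_of_integral_norm_sub_eq_zero [IsProbabilityMeasure μ]
    (hμ : Integrable (fun v => ‖v - x‖) μ) (h : ∫ v, ‖v - x‖ ∂μ = 0) :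
    μ = Measure.dirac x := by
  have hae : id =ᵐ[μ] fun _ => x := by
    filter_upwards [(integral_eq_zero_iff_of_nonneg (fun v => norm_nonneg _) hμ).1 h] with v hv
    exact sub_eq_zero.1 (norm_eq_zero.1 hv)
  simpa using (ProbabilityTheory.hasLaw_dirac_of_ae_eq hae).map_eq

variable [BorelSpace E] [SecondCountableTopology E]

theorem integrable_norm_sub_prod [IsFiniteMeasure μ] (hμ : Integrable (fun v => ‖v - x‖) μ) :
    Integrable (fun p : E × E => ‖p.1 - p.2‖) (μ.prod μ) := by
  have hsum : Integrable (fun p : E × E => ‖p.1 - x‖ + ‖p.2 - x‖) (μ.prod μ) :=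
    (hμ.comp_fst μ).add (hμ.comp_snd μ)
  refine hsum.mono' (continuous_fst.sub continuous_snd).norm.aestronglyMeasurable ?_
  filter_upwards with p
  rw [norm_norm, ← sub_nonneg]
  exact triangleDefect_nonneg x p

theorem integrable_triangleDefect [IsFiniteMeasure μ] (hμ : Integrable (fun v => ‖v - x‖) μ) :
    Integrable (triangleDefect x) (μ.prod μ) :=
  ((hμ.comp_fst μ).add (hμ.comp_snd μ)).sub (integrable_norm_sub_prod hμ)

theorem energyScore_eq_half_integral_triangleDefect [IsProbabilityMeasure μ]
    (hμ : Integrable (fun v => ‖v - x‖) μ) :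
    energyScore μ x = (1 / 2) * ∫ p, triangleDefect x p ∂(μ.prod μ) := by
  have h₁ : Integrable (fun p : E × E => ‖p.1 - x‖) (μ.prod μ) := hμ.comp_fst μ
  have h₂ : Integrable (fun p : E × E => ‖p.2 - x‖) (μ.prod μ) := hμ.comp_snd μ
  have h₁₂ : Integrable (fun p : E × E => ‖p.1 - x‖ + ‖p.2 - x‖) (μ.prod μ) := h₁.add h₂
  simp only [triangleDefect]
  rw [integral_sub h₁₂ (integrable_norm_sub_prod hμ), integral_add h₁ h₂,
    integral_fun_fst (fun v => ‖v - x‖), integral_fun_snd (fun v => ‖v - x‖),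
    ← integral_integral (f := fun v w => ‖v - w‖) (integrable_norm_sub_prod hμ), probReal_univ,
    one_smul, energyScore]
  ring

theorem energyScore_nonneg [IsProbabilityMeasure μ] (hμ : Integrable (fun v => ‖v - x‖) μ) :
    0 ≤ energyScore μ x := by
  rw [energyScore_eq_half_integral_triangleDefect hμ]
  exact mul_nonneg (by norm_num) (integral_nonneg (triangleDefect_nonneg x))

theorem ae_norm_sub_eq_of_energyScore_eq_zero [IsProbabilityMeasure μ]
    (hμ : Integrable (fun v => ‖v - x‖) μ) (h : energyScore μ x = 0) :
    ∀ᵐ p ∂(μ.prod μ), ‖p.1 - p.2‖ = ‖p.1 - x‖ + ‖p.2 - x‖ := by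
  rw [energyScore_eq_half_integral_triangleDefect hμ, mul_eq_zero, or_iff_right (by norm_num),
    integral_eq_zero_iff_of_nonneg (triangleDefect_nonneg x) (integrable_triangleDefect hμ)] at h
  filter_upwards [h] with p hp
  exact (sub_eq_zero.1 hp).symm

end NormedGroup

theorem integral_norm_eq_zero_of_ae_inner_eq_neg_mul_norm {α F : Type*} [MeasurableSpace α]
    [NormedAddCommGroup F] [InnerProductSpace ℝ F] [CompleteSpace F]
    {μ : Measure α} [SFinite μ] {f : α → F} (hf : Integrable f μ)
    (h : ∀ᵐ p ∂(μ.prod μ), ⟪f p.1, f p.2⟫ = -(‖f p.1‖ * ‖f p.2‖)) :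
    ∫ a, ‖f a‖ ∂μ = 0 := by
  have hsq : ⟪∫ a, f a ∂μ, ∫ a, f a ∂μ⟫ = -(∫ a, ‖f a‖ ∂μ) ^ 2 := calc
    ⟪∫ a, f a ∂μ, ∫ a, f a ∂μ⟫ = ∫ p, ⟪f p.1, f p.2⟫ ∂(μ.prod μ) :=
      (integral_prod_bilin (innerSL ℝ) hf hf).symm
    _ = -∫ p, ‖f p.1‖ * ‖f p.2‖ ∂(μ.prod μ) := by rw [integral_congr_ae h, integral_neg]
    _ = -(∫ a, ‖f a‖ ∂μ) ^ 2 := by rw [integral_prod_mul (fun a => ‖f a‖) (fun a => ‖f a‖), sq]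
  nlinarith [real_inner_self_nonneg (x := ∫ a, f a ∂μ)]

theorem eq_dirac_of_energyScore_eq_zero {F : Type*} [NormedAddCommGroup F]
    [InnerProductSpace ℝ F] [CompleteSpace F] [MeasurableSpace F] [BorelSpace F]
    [SecondCountableTopology F] {μ : Measure F} [IsProbabilityMeasure μ] {x : F}
    (hμ : Integrable (fun v => v - x) μ) (h : energyScore μ x = 0) :
    μ = Measure.dirac x := by
  refine eq_dirac_of_integral_norm_sub_eq_zero hμ.norm
    (integral_norm_eq_zero_of_ae_inner_eq_neg_mul_norm hμ ?_)
  filter_upwards [ae_norm_sub_eq_of_energyScore_eq_zero hμ.norm h] with p hp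
  refine inner_eq_neg_mul_norm_of_norm_sub_eq_add_norm ?_
  rwa [sub_sub_sub_cancel_right]

/-- The energy score `ES(P, x) = E‖X − x‖₂ − ½ E‖X − X'‖₂`, where `X, X'` are i.i.d.
with law `P` (a Borel probability measure on ℝ^D with finite first moment), is
nonnegative, and it equals zero if and only if `P` is the Dirac measure at `x`. -/
theorem energy_score_nonneg_and_zero_iff_dirac
    (D : ℕ) (P : Measure (EuclideanSpace ℝ (Fin D))) [IsProbabilityMeasure P]
    (hmom : Integrable (fun v => ‖v‖) P) (x : EuclideanSpace ℝ (Fin D)) :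
    let ES : ℝ := (∫ v, ‖v - x‖ ∂P) - (1 / 2) * ∫ v, ∫ w, ‖v - w‖ ∂P ∂P
    0 ≤ ES ∧ (ES = 0 ↔ P = Measure.dirac x) := by
  change 0 ≤ energyScore P x ∧ (energyScore P x = 0 ↔ P = Measure.dirac x)
  have hX : Integrable (fun v => v - x) P :=
    ((integrable_norm_iff aestronglyMeasurable_id).1 hmom).sub (integrable_const x)
  refine ⟨energyScore_nonneg hX.norm, eq_dirac_of_energyScore_eq_zero hX, ?_⟩
  rintro rfl
  exact energyScore_dirac x
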